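/- Let (X,d) be a complete metric space, k ∈ ℕ, and T : X^ℕ → X satisfy: for all u₁,…,u_k, v₁,…,v_k ∈ X, d(T(û), T(v̂)) ≤ (β(d(u_k, v_k))/2)·( d(T(û), v_k) + d(T(v̂), u_k) ), where û = (u₁,…,u_{k-1}, u_k, u_k, …) and v̂ = (v₁,…,v_{k-1}, v_k, v_k, …), and β is a Geraghty function. Then there exists u ∈ X such that T applied to the constant sequence (u,u,…) equals u, and the infinite k-Picard sequence from any base points x₁,…,x_k converges to u. -/

import Mathlib

open Filter Topology

def IsGeraghty (β : ℝ → ℝ) : Prop :=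
  (∀ t : ℝ, 0 ≤ t → 0 ≤ β t ∧ β t < 1) ∧
  (∀ t : ℕ → ℝ, (∀ n, 0 ≤ t n) →
    Filter.Tendsto (fun n => β (t n)) Filter.atTop (nhds 1) →
    Filter.Tendsto t Filter.atTop (nhds 0))

def hatSeq {X : Type*} (k : ℕ) (hk : 0 < k) (u : Fin k → X) : ℕ → X :=
  fun i => u ⟨min i (k - 1), by omega⟩

/-!
Along a `k`-Picard sequence `x`, the tail `yₙ = x (n + k - 1)` satisfies the Fisher–Geraghty
inequality `d(yₚ₊₁, y_q₊₁) ≤ β(d(yₚ, y_q))/2 · (d(yₚ₊₁, y_q) + d(y_q₊₁, yₚ))`. Whenever some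
distances `dᵢ ≥ ε > 0` satisfy `dᵢ ≤ β(tᵢ)(dᵢ + δᵢ)` with `δᵢ → 0`, we get `β(tᵢ) → 1`, hence
`tᵢ → 0`. Applied to consecutive distances this shows they decrease to `0`; applied to a pair of
subsequences staying `ε` apart it gives a contradiction, so `y` is Cauchy. Its limit is a fixed
point of `T` on constant sequences, and such a fixed point is unique because
`d(u, v) ≤ β(d(u, v)) d(u, v)` with `β < 1`.
-/

theorem IsGeraghty.tendsto_zero_of_le_mul_add {β : ℝ → ℝ} (hβ : IsGeraghty β)
    {t d δ : ℕ → ℝ} {ε : ℝ} (hε : 0 < ε) (ht : ∀ n, 0 ≤ t n) (hd : ∀ n, ε ≤ d n)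
    (hδ₀ : ∀ n, 0 ≤ δ n) (hδ : Tendsto δ atTop (𝓝 0))
    (h : ∀ n, d n ≤ β (t n) * (d n + δ n)) : Tendsto t atTop (𝓝 0) := by
  refine hβ.2 t ht (tendsto_of_tendsto_of_tendsto_of_le_of_le (g := fun n => 1 - δ n / ε) ?_
    tendsto_const_nhds (fun n => ?_) fun n => (hβ.1 (t n) (ht n)).2.le)
  · simpa using (hδ.div_const ε).const_sub (1 : ℝ)
  · obtain ⟨hβ₀, hβ₁⟩ := hβ.1 (t n) (ht n)
    -- `(1 - β) ε ≤ (1 - β) d ≤ β δ ≤ δ`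
    have : (1 - β (t n)) * ε ≤ δ n := by nlinarith [hd n, h n, hδ₀ n]
    rw [sub_le_comm, le_div_iff₀ hε]
    linarith

def IsFisherGeraghtySeq {X : Type*} [PseudoMetricSpace X] (β : ℝ → ℝ) (y : ℕ → X) : Prop :=
  ∀ p q, dist (y (p + 1)) (y (q + 1)) ≤
    β (dist (y p) (y q)) / 2 * (dist (y (p + 1)) (y q) + dist (y (q + 1)) (y p))

namespace IsFisherGeraghtySeq

variable {X : Type*} [PseudoMetricSpace X] {β : ℝ → ℝ} {y : ℕ → X}

theorem two_mul_dist_succ_le (hy : IsFisherGeraghtySeq β y) (hβ : IsGeraghty β) (n : ℕ) :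
    2 * dist (y (n + 1 + 1)) (y (n + 1)) ≤
      β (dist (y (n + 1)) (y n)) * (dist (y (n + 1)) (y n) + dist (y (n + 1 + 1)) (y (n + 1))) := by
  have h := hy (n + 1) n
  rw [dist_self, add_zero] at h
  have := dist_triangle (y (n + 1 + 1)) (y (n + 1)) (y n)
  have hβ₀ := (hβ.1 _ (dist_nonneg (x := y (n + 1)) (y := y n))).1
  nlinarith

theorem antitone_dist_succ (hy : IsFisherGeraghtySeq β y) (hβ : IsGeraghty β) :
    Antitone fun n => dist (y (n + 1)) (y n) := by
  refine antitone_nat_of_succ_le fun n => ?_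
  have h := hy.two_mul_dist_succ_le hβ n
  have := (hβ.1 _ (dist_nonneg (x := y (n + 1)) (y := y n))).2
  nlinarith [dist_nonneg (x := y (n + 1)) (y := y n),
    dist_nonneg (x := y (n + 1 + 1)) (y := y (n + 1))]

theorem tendsto_dist_succ (hy : IsFisherGeraghtySeq β y) (hβ : IsGeraghty β) :
    Tendsto (fun n => dist (y (n + 1)) (y n)) atTop (𝓝 0) := by
  set E := fun n => dist (y (n + 1)) (y n)
  have hanti : Antitone E := hy.antitone_dist_succ hβ
  have hbdd : BddBelow (Set.range E) := ⟨0, by rintro _ ⟨n, rfl⟩; exact dist_nonneg⟩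
  have hL := tendsto_atTop_ciInf hanti hbdd
  rcases (le_ciInf fun n => dist_nonneg : 0 ≤ ⨅ n, E n).eq_or_lt with h0 | hpos
  · rwa [← h0] at hL
  have hδ : Tendsto (fun n => (E n - E (n + 1)) / 2) atTop (𝓝 0) := by
    simpa using (hL.sub (hL.comp (tendsto_add_atTop_nat 1))).div_const 2
  have h0 := hβ.tendsto_zero_of_le_mul_add (t := E) hpos (fun n => dist_nonneg)
    (fun n => ciInf_le hbdd (n + 1)) (fun n => by linarith [hanti n.le_succ]) hδ
    (fun n => by linarith [hy.two_mul_dist_succ_le hβ n])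
  exact absurd (tendsto_nhds_unique hL h0) hpos.ne'

theorem cauchySeq (hy : IsFisherGeraghtySeq β y) (hβ : IsGeraghty β) : CauchySeq y := by
  set E := fun n => dist (y (n + 1)) (y n)
  have hE : Tendsto E atTop (𝓝 0) := hy.tendsto_dist_succ hβ
  rw [← cauchySeq_shift 1, Metric.cauchySeq_iff]
  by_contra! h
  obtain ⟨ε, hε, h⟩ := h
  choose m hm n hn hmn using h
  have hEm : Tendsto (fun i => E (m i)) atTop (𝓝 0) := hE.comp (tendsto_atTop_mono hm tendsto_id)
  have hEn : Tendsto (fun i => E (n i)) atTop (𝓝 0) := hE.comp (tendsto_atTop_mono hn tendsto_id)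
  have ht : Tendsto (fun i => dist (y (m i)) (y (n i))) atTop (𝓝 0) := by
    refine hβ.tendsto_zero_of_le_mul_add (δ := fun i => (E (m i) + E (n i)) / 2) hε
      (fun _ => dist_nonneg) hmn (fun i => by positivity)
      (by simpa using (hEm.add hEn).div_const 2) fun i => ?_
    have h := hy (m i) (n i)
    have h₁ := dist_triangle (y (m i + 1)) (y (n i + 1)) (y (n i))
    have h₂ := dist_triangle (y (n i + 1)) (y (m i + 1)) (y (m i))
    rw [dist_comm (y (n i + 1)) (y (m i + 1))] at h₂
    have hβ₀ := (hβ.1 _ (dist_nonneg (x := y (m i)) (y := y (n i)))).1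
    nlinarith
  have hsum : Tendsto (fun i => E (m i) + dist (y (m i)) (y (n i)) + E (n i)) atTop (𝓝 0) := by
    simpa using (hEm.add ht).add hEn
  have hε_le : ε ≤ 0 := ge_of_tendsto' hsum fun i => (hmn i).trans <| by
    simpa [E, dist_comm (y (n i))] using
      dist_triangle4 (y (m i + 1)) (y (m i)) (y (n i)) (y (n i + 1))
  exact hε.not_ge hε_le

end IsFisherGeraghtySeq

def IsPicardSeq {X : Type*} (k : ℕ) (hk : 0 < k) (T : (ℕ → X) → X) (x : ℕ → X) : Prop :=
  ∀ n, x (n + k) = T (hatSeq k hk fun i : Fin k => x (n + i))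

def IsFisherGeraghtyHkContraction {X : Type*} [PseudoMetricSpace X] (k : ℕ) (hk : 0 < k)
    (β : ℝ → ℝ) (T : (ℕ → X) → X) : Prop :=
  ∀ a b : Fin k → X,
    dist (T (hatSeq k hk a)) (T (hatSeq k hk b)) ≤
      β (dist (a ⟨k - 1, Nat.sub_lt hk one_pos⟩) (b ⟨k - 1, Nat.sub_lt hk one_pos⟩)) / 2 *
        (dist (T (hatSeq k hk a)) (b ⟨k - 1, Nat.sub_lt hk one_pos⟩) +
          dist (T (hatSeq k hk b)) (a ⟨k - 1, Nat.sub_lt hk one_pos⟩))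

section Picard

variable {X : Type*} {k : ℕ} {hk : 0 < k} {T : (ℕ → X) → X}

theorem hatSeq_const (v : X) : hatSeq k hk (fun _ => v) = fun _ => v := rfl

variable (k hk T) in
def picardSeq (x₀ : X) (n : ℕ) : X :=
  if n < k then x₀ else T (hatSeq k hk fun i : Fin k => picardSeq x₀ (n - k + i))
termination_by n
decreasing_by omega

theorem isPicardSeq_picardSeq (x₀ : X) : IsPicardSeq k hk T (picardSeq k hk T x₀) := by
  intro n
  rw [picardSeq, if_neg (by omega), Nat.add_sub_cancel]

variable {β : ℝ → ℝ} {x : ℕ → X} {u v : X}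

theorem IsPicardSeq.isFisherGeraghtySeq [PseudoMetricSpace X] (hx : IsPicardSeq k hk T x)
    (hT : IsFisherGeraghtyHkContraction k hk β T) :
    IsFisherGeraghtySeq β fun n => x (n + (k - 1)) := by
  intro p q
  have h := hT (fun i => x (p + i)) (fun i => x (q + i))
  rw [← hx p, ← hx q] at h
  have hidx : ∀ n, n + 1 + (k - 1) = n + k := fun n => by omega
  simpa only [hidx] using h

theorem IsPicardSeq.fixed_of_tendsto [MetricSpace X] (hx : IsPicardSeq k hk T x)
    (hβ : IsGeraghty β) (hT : IsFisherGeraghtyHkContraction k hk β T)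
    (hu : Tendsto x atTop (𝓝 u)) : T (fun _ => u) = u := by
  have hbound : ∀ n, dist (x (n + k)) (T fun _ => u) ≤
      (dist (x (n + k)) u + dist (T fun _ => u) (x (n + (k - 1)))) / 2 := by
    intro n
    have h := hT (fun i => x (n + i)) (fun _ => u)
    rw [← hx n, hatSeq_const] at h
    obtain ⟨hβ₀, hβ₁⟩ := hβ.1 _ (dist_nonneg (x := x (n + (k - 1))) (y := u))
    nlinarith [dist_nonneg (x := x (n + k)) (y := u),
      dist_nonneg (x := T fun _ => u) (y := x (n + (k - 1)))]
  have huk := hu.comp (tendsto_add_atTop_nat k)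
  have hlim := le_of_tendsto_of_tendsto' (huk.dist tendsto_const_nhds)
    (((huk.dist tendsto_const_nhds).add
      (tendsto_const_nhds.dist (hu.comp (tendsto_add_atTop_nat (k - 1))))).div_const 2) hbound
  rw [dist_self, zero_add, dist_comm] at hlim
  exact dist_le_zero.1 (by linarith [dist_nonneg (x := T fun _ => u) (y := u)])

theorem IsFisherGeraghtyHkContraction.fixedPoint_unique [MetricSpace X] (hβ : IsGeraghty β)
    (hT : IsFisherGeraghtyHkContraction k hk β T) (hu : T (fun _ => u) = u)
    (hv : T (fun _ => v) = v) : u = v := by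
  have h := hT (fun _ => u) (fun _ => v)
  rw [hatSeq_const, hatSeq_const, hu, hv, dist_comm v u] at h
  obtain ⟨-, hβ₁⟩ := hβ.1 _ (dist_nonneg (x := u) (y := v))
  exact dist_le_zero.1 (by nlinarith [dist_nonneg (x := u) (y := v)])

theorem IsPicardSeq.exists_fixed_tendsto [MetricSpace X] [CompleteSpace X]
    (hx : IsPicardSeq k hk T x) (hβ : IsGeraghty β) (hT : IsFisherGeraghtyHkContraction k hk β T) :
    ∃ u, T (fun _ => u) = u ∧ Tendsto x atTop (𝓝 u) := by
  have hcauchy : CauchySeq x :=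
    (cauchySeq_shift (k - 1)).1 ((hx.isFisherGeraghtySeq hT).cauchySeq hβ)
  obtain ⟨u, hu⟩ := cauchySeq_tendsto_of_complete hcauchy
  exact ⟨u, hx.fixed_of_tendsto hβ hT hu, hu⟩

end Picard

theorem extended_fisher_geraghty_Hk {X : Type*} [MetricSpace X] [CompleteSpace X] [Nonempty X]
    (k : ℕ) (hk : 0 < k) (β : ℝ → ℝ) (hβ : IsGeraghty β) (T : (ℕ → X) → X)
    (hT : ∀ a b : Fin k → X,
      dist (T (hatSeq k hk a)) (T (hatSeq k hk b)) ≤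
        β (dist (a ⟨k - 1, by omega⟩) (b ⟨k - 1, by omega⟩)) / 2 *
          (dist (T (hatSeq k hk a)) (b ⟨k - 1, by omega⟩) +
            dist (T (hatSeq k hk b)) (a ⟨k - 1, by omega⟩))) :
    ∃ u : X, T (fun _ => u) = u ∧
      ∀ x : ℕ → X, (∀ n, x (n + k) = T (hatSeq k hk (fun i : Fin k => x (n + i)))) →
        Tendsto x atTop (𝓝 u) := by
  obtain ⟨x₀⟩ := ‹Nonempty X›
  obtain ⟨u, hu, -⟩ := (isPicardSeq_picardSeq (hk := hk) (T := T) x₀).exists_fixed_tendsto hβ hT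
  refine ⟨u, hu, fun x hx => ?_⟩
  obtain ⟨v, hv, hxv⟩ := IsPicardSeq.exists_fixed_tendsto hx hβ hT
  rwa [IsFisherGeraghtyHkContraction.fixedPoint_unique hβ hT hv hu] at hxv
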